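/- arXiv:2209.14891 — 2 statements merged into one kernel-verified Lean document; each statement's English description precedes it below -/
import Mathlib

section
/- Suppose Σ(d) = ε₁ε₂ μ(d) μ(d)^T + ε₁Ψ₁(d) + ε₂Ψ₂(d) with fixed ε₁, ε₂ > 0, ε₁+ε₂=1, and suppose λ_max(Ψ_s(d))/‖μ(d)‖² → 0 as d → ∞ for s = 1, 2. Then λ₁(Σ(d))/(ε₁ε₂‖μ(d)‖²) → 1 as d → ∞. -/
/-!
Write `N = ‖μ‖²`. Testing the Rayleigh quotient of `Σ` at `μ` and using `Ψ₁, Ψ₂ ⪰ 0` gives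
`λ₁(Σ) ≥ ε₁ε₂ N`. Conversely, at a top unit eigenvector `v` of `Σ`, Cauchy–Schwarz bounds the
spike term by `ε₁ε₂ (μ ⬝ v)² ≤ ε₁ε₂ N` and the Rayleigh bound for `Ψ_s` gives
`λ₁(Σ) ≤ ε₁ε₂ N + ε₁ λ_max(Ψ₁) + ε₂ λ_max(Ψ₂)`. Dividing by `ε₁ε₂ N`, the ratio is squeezed
between `1` and `1 + o(1)`.
-/

open Filter Matrix

lemma Matrix.star_mulVec_eq_vecMul {n : Type*} [Fintype n] (U : Matrix n n ℝ) (x : n → ℝ) :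
    star U *ᵥ x = x ᵥ* U := by
  rw [star_eq_conjTranspose, conjTranspose_eq_transpose_of_trivial, mulVec_transpose]

namespace Matrix.IsHermitian

variable {n : Type*} [Fintype n] [DecidableEq n] {A : Matrix n n ℝ} (hA : A.IsHermitian)

lemma dotProduct_mulVec_self_eq_sum_eigenvalues_mul_sq (x : n → ℝ) :
    x ⬝ᵥ (A *ᵥ x) = ∑ i, hA.eigenvalues i *
      ((star (hA.eigenvectorUnitary : Matrix n n ℝ) *ᵥ x) i) ^ 2 := by
  set U := (hA.eigenvectorUnitary : Matrix n n ℝ)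
  conv_lhs => rw [hA.spectral_theorem]
  rw [Unitary.conjStarAlgAut_apply, ← mulVec_mulVec, ← mulVec_mulVec, dotProduct_mulVec,
    ← star_mulVec_eq_vecMul]
  simp only [Function.comp_apply, RCLike.ofReal_real_eq_id, id_eq, mulVec_diagonal, dotProduct]
  exact Finset.sum_congr rfl fun i _ => by ring

lemma dotProduct_self_star_eigenvectorUnitary_mulVec (x : n → ℝ) :
    (star (hA.eigenvectorUnitary : Matrix n n ℝ) *ᵥ x) ⬝ᵥ
      (star (hA.eigenvectorUnitary : Matrix n n ℝ) *ᵥ x) = x ⬝ᵥ x := by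
  set U := (hA.eigenvectorUnitary : Matrix n n ℝ)
  nth_rewrite 1 [star_mulVec_eq_vecMul]
  rw [← dotProduct_mulVec, mulVec_mulVec,
    Unitary.mul_star_self_of_mem hA.eigenvectorUnitary.2, one_mulVec]

theorem dotProduct_mulVec_self_le_iSup_eigenvalues_mul (x : n → ℝ) :
    x ⬝ᵥ (A *ᵥ x) ≤ (⨆ i, hA.eigenvalues i) * (x ⬝ᵥ x) := by
  rw [hA.dotProduct_mulVec_self_eq_sum_eigenvalues_mul_sq x,
    ← hA.dotProduct_self_star_eigenvectorUnitary_mulVec x]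
  simp only [dotProduct, ← sq, Finset.mul_sum]
  exact Finset.sum_le_sum fun i _ => mul_le_mul_of_nonneg_right
    (le_ciSup (Set.finite_range _).bddAbove i) (sq_nonneg _)

theorem exists_dotProduct_self_eq_one_and_dotProduct_mulVec_eq_iSup_eigenvalues [Nonempty n] :
    ∃ v : n → ℝ, v ⬝ᵥ v = 1 ∧ v ⬝ᵥ (A *ᵥ v) = ⨆ i, hA.eigenvalues i := by
  obtain ⟨i, hi⟩ := exists_eq_ciSup_of_finite (f := hA.eigenvalues)
  have hunit : (hA.eigenvectorBasis i : n → ℝ) ⬝ᵥ (hA.eigenvectorBasis i : n → ℝ) = 1 := by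
    have h := real_inner_self_eq_norm_sq (hA.eigenvectorBasis i)
    rw [hA.eigenvectorBasis.orthonormal.1 i, EuclideanSpace.inner_eq_star_dotProduct] at h
    simpa using h
  refine ⟨hA.eigenvectorBasis i, hunit, ?_⟩
  rw [hA.mulVec_eigenvectorBasis i, dotProduct_smul, smul_eq_mul, hunit, mul_one, hi]

end Matrix.IsHermitian

section SpikedCovariance

variable {n : Type*} [Fintype n] {m : n → ℝ} {P Q S : Matrix n n ℝ} {c a b : ℝ}

lemma dotProduct_mulVec_vecMulVec_self (m x : n → ℝ) :
    x ⬝ᵥ (vecMulVec m m *ᵥ x) = (m ⬝ᵥ x) ^ 2 := by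
  rw [vecMulVec_mulVec]
  simp only [op_smul_eq_smul, dotProduct_comm x, smul_dotProduct, smul_eq_mul, sq]

lemma sq_dotProduct_le_dotProduct_self_mul_dotProduct_self (m x : n → ℝ) :
    (m ⬝ᵥ x) ^ 2 ≤ (m ⬝ᵥ m) * (x ⬝ᵥ x) := by
  simpa only [dotProduct, sq] using Finset.sum_mul_sq_le_sq_mul_sq Finset.univ m x

lemma dotProduct_mulVec_spiked (hS : S = c • vecMulVec m m + a • P + b • Q) (x : n → ℝ) :
    x ⬝ᵥ (S *ᵥ x) = c * (m ⬝ᵥ x) ^ 2 + a * (x ⬝ᵥ (P *ᵥ x)) + b * (x ⬝ᵥ (Q *ᵥ x)) := by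
  simp only [hS, add_mulVec, smul_mulVec, dotProduct_add, dotProduct_smul, smul_eq_mul,
    dotProduct_mulVec_vecMulVec_self]

theorem mul_dotProduct_self_le_iSup_eigenvalues_spiked [DecidableEq n]
    (hS : S = c • vecMulVec m m + a • P + b • Q) (hSh : S.IsHermitian) (hm : m ≠ 0)
    (hP : P.PosSemidef) (hQ : Q.PosSemidef) (ha : 0 ≤ a) (hb : 0 ≤ b) :
    c * (m ⬝ᵥ m) ≤ ⨆ i, hSh.eigenvalues i := by
  have hmm : 0 < m ⬝ᵥ m := by simpa using dotProduct_self_star_pos_iff.mpr hm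
  have hPm : 0 ≤ m ⬝ᵥ (P *ᵥ m) := by simpa using hP.dotProduct_mulVec_nonneg m
  have hQm : 0 ≤ m ⬝ᵥ (Q *ᵥ m) := by simpa using hQ.dotProduct_mulVec_nonneg m
  have hquad : c * (m ⬝ᵥ m) * (m ⬝ᵥ m) ≤ m ⬝ᵥ (S *ᵥ m) := by
    rw [dotProduct_mulVec_spiked hS]
    nlinarith [mul_nonneg ha hPm, mul_nonneg hb hQm]
  exact le_of_mul_le_mul_right
    (hquad.trans (hSh.dotProduct_mulVec_self_le_iSup_eigenvalues_mul m)) hmm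

theorem iSup_eigenvalues_le_spiked [DecidableEq n] [Nonempty n]
    (hS : S = c • vecMulVec m m + a • P + b • Q) (hSh : S.IsHermitian)
    (hP : P.IsHermitian) (hQ : Q.IsHermitian) (hc : 0 ≤ c) (ha : 0 ≤ a) (hb : 0 ≤ b) :
    ⨆ i, hSh.eigenvalues i ≤
      c * (m ⬝ᵥ m) + a * (⨆ i, hP.eigenvalues i) + b * ⨆ i, hQ.eigenvalues i := by
  obtain ⟨v, hv, hSv⟩ := hSh.exists_dotProduct_self_eq_one_and_dotProduct_mulVec_eq_iSup_eigenvalues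
  have hmv : (m ⬝ᵥ v) ^ 2 ≤ m ⬝ᵥ m := by
    simpa [hv] using sq_dotProduct_le_dotProduct_self_mul_dotProduct_self m v
  have hPv : v ⬝ᵥ (P *ᵥ v) ≤ ⨆ i, hP.eigenvalues i := by
    simpa [hv] using hP.dotProduct_mulVec_self_le_iSup_eigenvalues_mul v
  have hQv : v ⬝ᵥ (Q *ᵥ v) ≤ ⨆ i, hQ.eigenvalues i := by
    simpa [hv] using hQ.dotProduct_mulVec_self_le_iSup_eigenvalues_mul v
  rw [← hSv, dotProduct_mulVec_spiked hS]
  linarith [mul_le_mul_of_nonneg_left hmv hc, mul_le_mul_of_nonneg_left hPv ha,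
    mul_le_mul_of_nonneg_left hQv hb]

end SpikedCovariance

theorem stmt7_general (ε₁ ε₂ : ℝ) (hε₁ : 0 < ε₁) (hε₂ : 0 < ε₂)
    (μ : (d : ℕ) → Fin (d + 1) → ℝ) (hμ : ∀ d, μ d ≠ 0)
    (Ψ₁ Ψ₂ : (d : ℕ) → Matrix (Fin (d + 1)) (Fin (d + 1)) ℝ)
    (hΨ₁ : ∀ d, (Ψ₁ d).PosSemidef) (hΨ₂ : ∀ d, (Ψ₂ d).PosSemidef)
    (S : (d : ℕ) → Matrix (Fin (d + 1)) (Fin (d + 1)) ℝ)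
    (hS : ∀ d, S d = (ε₁ * ε₂) • Matrix.vecMulVec (μ d) (μ d) + ε₁ • Ψ₁ d + ε₂ • Ψ₂ d)
    (hherm : ∀ d, (S d).IsHermitian)
    (hlim₁ : Tendsto
      (fun d => (⨆ i, (hΨ₁ d).isHermitian.eigenvalues i) / (∑ i, μ d i ^ 2))
      atTop (nhds 0))
    (hlim₂ : Tendsto
      (fun d => (⨆ i, (hΨ₂ d).isHermitian.eigenvalues i) / (∑ i, μ d i ^ 2))
      atTop (nhds 0)) :
    Tendsto (fun d => (⨆ i, (hherm d).eigenvalues i) / (ε₁ * ε₂ * ∑ i, μ d i ^ 2))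
      atTop (nhds 1) := by
  have hc : 0 < ε₁ * ε₂ := mul_pos hε₁ hε₂
  have hN : ∀ d, μ d ⬝ᵥ μ d = ∑ i, μ d i ^ 2 := fun d => by simp only [dotProduct, sq]
  have hNpos : ∀ d, 0 < ∑ i, μ d i ^ 2 := fun d => by
    simpa [← hN] using dotProduct_self_star_pos_iff.mpr (hμ d)
  have hlower : ∀ d, 1 ≤ (⨆ i, (hherm d).eigenvalues i) / (ε₁ * ε₂ * ∑ i, μ d i ^ 2) := by
    intro d
    rw [le_div_iff₀ (mul_pos hc (hNpos d)), one_mul, ← hN]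
    exact mul_dotProduct_self_le_iSup_eigenvalues_spiked (hS d) (hherm d) (hμ d) (hΨ₁ d) (hΨ₂ d)
      hε₁.le hε₂.le
  have hupper : ∀ d, (⨆ i, (hherm d).eigenvalues i) / (ε₁ * ε₂ * ∑ i, μ d i ^ 2) ≤
      1 + ε₂⁻¹ * ((⨆ i, (hΨ₁ d).isHermitian.eigenvalues i) / ∑ i, μ d i ^ 2) +
        ε₁⁻¹ * ((⨆ i, (hΨ₂ d).isHermitian.eigenvalues i) / ∑ i, μ d i ^ 2) := by
    intro d
    rw [div_le_iff₀ (mul_pos hc (hNpos d))]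
    refine (iSup_eigenvalues_le_spiked (hS d) (hherm d) (hΨ₁ d).isHermitian
      (hΨ₂ d).isHermitian hc.le hε₁.le hε₂.le).trans_eq ?_
    rw [hN]
    field_simp [(hNpos d).ne']
  have hbound := (tendsto_const_nhds (x := (1 : ℝ))).add (hlim₁.const_mul ε₂⁻¹) |>.add
    (hlim₂.const_mul ε₁⁻¹)
  rw [mul_zero, add_zero, mul_zero, add_zero] at hbound
  exact tendsto_of_tendsto_of_tendsto_of_le_of_le tendsto_const_nhds hbound hlower hupper

/-- If `λ_max(Ψ_s(d))/‖μ(d)‖² → 0` for `s = 1,2`, then the largest eigenvalue of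
`Σ(d) = ε₁ε₂ μμᵀ + ε₁Ψ₁ + ε₂Ψ₂` satisfies `λ₁/(ε₁ε₂‖μ‖²) → 1` as `d → ∞`. -/
theorem stmt7 (ε₁ ε₂ : ℝ) (hε₁ : 0 < ε₁) (hε₂ : 0 < ε₂) (hsum : ε₁ + ε₂ = 1)
    (μ : (d : ℕ) → Fin (d + 1) → ℝ) (hμ : ∀ d, μ d ≠ 0)
    (Ψ₁ Ψ₂ : (d : ℕ) → Matrix (Fin (d + 1)) (Fin (d + 1)) ℝ)
    (hΨ₁ : ∀ d, (Ψ₁ d).PosSemidef) (hΨ₂ : ∀ d, (Ψ₂ d).PosSemidef)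
    (S : (d : ℕ) → Matrix (Fin (d + 1)) (Fin (d + 1)) ℝ)
    (hS : ∀ d, S d = (ε₁ * ε₂) • Matrix.vecMulVec (μ d) (μ d) + ε₁ • Ψ₁ d + ε₂ • Ψ₂ d)
    (hherm : ∀ d, (S d).IsHermitian)
    (hlim₁ : Tendsto
      (fun d => (⨆ i, (hΨ₁ d).isHermitian.eigenvalues i) / (∑ i, μ d i ^ 2))
      atTop (nhds 0))
    (hlim₂ : Tendsto
      (fun d => (⨆ i, (hΨ₂ d).isHermitian.eigenvalues i) / (∑ i, μ d i ^ 2))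
      atTop (nhds 0)) :
    Tendsto (fun d => (⨆ i, (hherm d).eigenvalues i) / (ε₁ * ε₂ * ∑ i, μ d i ^ 2))
      atTop (nhds 1) :=
  stmt7_general ε₁ ε₂ hε₁ hε₂ μ hμ Ψ₁ Ψ₂ hΨ₁ hΨ₂ S hS hherm hlim₁ hlim₂
end

section
/- Suppose Σ(d) = ε₁ε₂ μ(d) μ(d)^T + ε₁Ψ₁(d) + ε₂Ψ₂(d) with fixed ε₁, ε₂ > 0, ε₁+ε₂=1, and λ_max(Ψ_s(d))/‖μ(d)‖² → 0 as d → ∞ for s = 1, 2. Let h₁(d) be a unit first eigenvector of Σ(d) with h₁(d)^T μ(d) ≥ 0. Then the angle between h₁(d) and μ(d) converges to 0, i.e., h₁(d)^T μ(d)/‖μ(d)‖ → 1 as d → ∞. -/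
/-!
Write `Σ = ε₁ε₂ μμᵀ + ε₁Ψ₁ + ε₂Ψ₂` and `λ` for its top eigenvalue. Testing the Rayleigh bound
`xᵀΣx ≤ λ‖x‖²` at `x = μ` and dropping the positive semidefinite terms gives `ε₁ε₂‖μ‖² ≤ λ`;
on the other hand `λ = hᵀΣh ≤ ε₁ε₂(hᵀμ)² + ε₁λ_max(Ψ₁) + ε₂λ_max(Ψ₂)` for the unit eigenvector
`h`. Dividing by `ε₁ε₂‖μ‖²`, the squared cosine `(hᵀμ)²/‖μ‖²` is at least `1 - o(1)`, and the
cosine itself lies in `[0, 1]` by the sign normalisation and Cauchy–Schwarz.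
-/

open Filter Matrix
open scoped MatrixOrder

namespace Matrix.IsHermitian

variable {n : Type*} [Fintype n] [DecidableEq n] {A : Matrix n n ℝ}

theorem le_iSup_eigenvalues_smul_one (hA : A.IsHermitian) :
    A ≤ (⨆ i, hA.eigenvalues i) • (1 : Matrix n n ℝ) := by
  rw [← Algebra.algebraMap_eq_smul_one]
  refine le_algebraMap_of_spectrum_le (fun x hx => ?_) hA.isSelfAdjoint
  obtain ⟨i, rfl⟩ := hA.spectrum_real_eq_range_eigenvalues ▸ hx
  exact le_ciSup (Set.finite_range _).bddAbove i

theorem dotProduct_mulVec_le_iSup_eigenvalues_mul (hA : A.IsHermitian) (x : n → ℝ) :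
    x ⬝ᵥ A *ᵥ x ≤ (⨆ i, hA.eigenvalues i) * (x ⬝ᵥ x) := by
  have := (Matrix.le_iff.mp (le_iSup_eigenvalues_smul_one hA)).dotProduct_mulVec_nonneg x
  simp only [star_trivial, sub_mulVec, smul_mulVec, one_mulVec, dotProduct_sub,
    dotProduct_smul, smul_eq_mul] at this
  linarith

end Matrix.IsHermitian

theorem Matrix.PosSemidef.dotProduct_mulVec_nonneg_real {n : Type*} [Fintype n]
    {A : Matrix n n ℝ} (hA : A.PosSemidef) (x : n → ℝ) : 0 ≤ x ⬝ᵥ A *ᵥ x := by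
  simpa using hA.dotProduct_mulVec_nonneg x

theorem dotProduct_div_sqrt_le_one {n : Type*} [Fintype n] {u v : n → ℝ} (hu : u ⬝ᵥ u = 1) :
    u ⬝ᵥ v / √(v ⬝ᵥ v) ≤ 1 := by
  have hcs : (u ⬝ᵥ v) ^ 2 ≤ (u ⬝ᵥ u) * (v ⬝ᵥ v) := by
    simpa only [dotProduct, sq] using Finset.sum_mul_sq_le_sq_mul_sq Finset.univ u v
  rw [hu, one_mul] at hcs
  exact div_le_one_of_le₀ (Real.le_sqrt_of_sq_le hcs) (Real.sqrt_nonneg _)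

theorem tendsto_one_of_le_sq {α : Type*} {l : Filter α} {g t : α → ℝ}
    (hg : Tendsto g l (nhds 1)) (ht : ∀ a, t a ∈ Set.Icc 0 1) (hgt : ∀ a, g a ≤ t a ^ 2) :
    Tendsto t l (nhds 1) := by
  refine tendsto_of_tendsto_of_tendsto_of_le_of_le hg tendsto_const_nhds (fun a => ?_)
    (fun a => (ht a).2)
  obtain ⟨h0, h1⟩ := ht a
  nlinarith [hgt a]

section SpikedCovariance

variable {n : Type*} [Fintype n] {ε₁ ε₂ : ℝ} {μ : n → ℝ} {Ψ₁ Ψ₂ : Matrix n n ℝ}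

def spikedCovariance (ε₁ ε₂ : ℝ) (μ : n → ℝ) (Ψ₁ Ψ₂ : Matrix n n ℝ) : Matrix n n ℝ :=
  (ε₁ * ε₂) • vecMulVec μ μ + ε₁ • Ψ₁ + ε₂ • Ψ₂

theorem dotProduct_spikedCovariance_mulVec (x : n → ℝ) :
    x ⬝ᵥ spikedCovariance ε₁ ε₂ μ Ψ₁ Ψ₂ *ᵥ x
      = ε₁ * ε₂ * (x ⬝ᵥ μ) ^ 2 + ε₁ * (x ⬝ᵥ Ψ₁ *ᵥ x) + ε₂ * (x ⬝ᵥ Ψ₂ *ᵥ x) := by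
  simp only [spikedCovariance, add_mulVec, smul_mulVec, vecMulVec_mulVec, dotProduct_add,
    dotProduct_smul, smul_eq_mul, op_smul_eq_mul, dotProduct_comm μ x]
  ring

variable [DecidableEq n]

theorem mul_dotProduct_self_le_iSup_eigenvalues_spikedCovariance (hε₁ : 0 ≤ ε₁) (hε₂ : 0 ≤ ε₂)
    (hΨ₁ : Ψ₁.PosSemidef) (hΨ₂ : Ψ₂.PosSemidef) (hμ : μ ≠ 0)
    (hS : (spikedCovariance ε₁ ε₂ μ Ψ₁ Ψ₂).IsHermitian) :
    ε₁ * ε₂ * (μ ⬝ᵥ μ) ≤ ⨆ i, hS.eigenvalues i := by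
  have hpos : 0 < μ ⬝ᵥ μ := by simpa using dotProduct_star_self_pos_iff.mpr hμ
  have hray := hS.dotProduct_mulVec_le_iSup_eigenvalues_mul μ
  rw [dotProduct_spikedCovariance_mulVec] at hray
  have h₁ := mul_nonneg hε₁ (hΨ₁.dotProduct_mulVec_nonneg_real μ)
  have h₂ := mul_nonneg hε₂ (hΨ₂.dotProduct_mulVec_nonneg_real μ)
  refine le_of_mul_le_mul_right ?_ hpos
  nlinarith

theorem eigenvalue_spikedCovariance_le (hε₁ : 0 ≤ ε₁) (hε₂ : 0 ≤ ε₂)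
    (hΨ₁ : Ψ₁.IsHermitian) (hΨ₂ : Ψ₂.IsHermitian) {h : n → ℝ} {lam : ℝ}
    (hh : h ⬝ᵥ h = 1) (heig : spikedCovariance ε₁ ε₂ μ Ψ₁ Ψ₂ *ᵥ h = lam • h) :
    lam ≤ ε₁ * ε₂ * (h ⬝ᵥ μ) ^ 2 + ε₁ * (⨆ i, hΨ₁.eigenvalues i)
      + ε₂ * (⨆ i, hΨ₂.eigenvalues i) := by
  have hlam : lam = h ⬝ᵥ spikedCovariance ε₁ ε₂ μ Ψ₁ Ψ₂ *ᵥ h := by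
    rw [heig, dotProduct_smul, smul_eq_mul, hh, mul_one]
  have h₁ := hΨ₁.dotProduct_mulVec_le_iSup_eigenvalues_mul h
  have h₂ := hΨ₂.dotProduct_mulVec_le_iSup_eigenvalues_mul h
  rw [hh, mul_one] at h₁ h₂
  rw [hlam, dotProduct_spikedCovariance_mulVec]
  gcongr

theorem one_sub_le_sq_dotProduct_div_sqrt (hε₁ : 0 < ε₁) (hε₂ : 0 < ε₂)
    (hΨ₁ : Ψ₁.PosSemidef) (hΨ₂ : Ψ₂.PosSemidef) (hμ : μ ≠ 0)
    (hS : (spikedCovariance ε₁ ε₂ μ Ψ₁ Ψ₂).IsHermitian) {h : n → ℝ} (hh : h ⬝ᵥ h = 1)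
    (heig : spikedCovariance ε₁ ε₂ μ Ψ₁ Ψ₂ *ᵥ h = (⨆ i, hS.eigenvalues i) • h) :
    1 - (⨆ i, hΨ₁.isHermitian.eigenvalues i) / (μ ⬝ᵥ μ) / ε₂
        - (⨆ i, hΨ₂.isHermitian.eigenvalues i) / (μ ⬝ᵥ μ) / ε₁
      ≤ (h ⬝ᵥ μ / √(μ ⬝ᵥ μ)) ^ 2 := by
  have hpos : 0 < μ ⬝ᵥ μ := by simpa using dotProduct_star_self_pos_iff.mpr hμ
  have hle :=
    (mul_dotProduct_self_le_iSup_eigenvalues_spikedCovariance hε₁.le hε₂.le hΨ₁ hΨ₂ hμ hS).trans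
      (eigenvalue_spikedCovariance_le hε₁.le hε₂.le hΨ₁.isHermitian hΨ₂.isHermitian hh heig)
  rw [div_pow, Real.sq_sqrt hpos.le, le_div_iff₀ hpos]
  field_simp
  nlinarith [mul_pos hε₁ hε₂]

end SpikedCovariance

theorem stmt8_general (ε₁ ε₂ : ℝ) (hε₁ : 0 < ε₁) (hε₂ : 0 < ε₂)
    (μ : (d : ℕ) → Fin (d + 1) → ℝ) (hμ : ∀ d, μ d ≠ 0)
    (Ψ₁ Ψ₂ : (d : ℕ) → Matrix (Fin (d + 1)) (Fin (d + 1)) ℝ)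
    (hΨ₁ : ∀ d, (Ψ₁ d).PosSemidef) (hΨ₂ : ∀ d, (Ψ₂ d).PosSemidef)
    (S : (d : ℕ) → Matrix (Fin (d + 1)) (Fin (d + 1)) ℝ)
    (hS : ∀ d, S d = (ε₁ * ε₂) • Matrix.vecMulVec (μ d) (μ d) + ε₁ • Ψ₁ d + ε₂ • Ψ₂ d)
    (hherm : ∀ d, (S d).IsHermitian)
    (hlim₁ : Tendsto
      (fun d => (⨆ i, (hΨ₁ d).isHermitian.eigenvalues i) / (∑ i, μ d i ^ 2))
      atTop (nhds 0))
    (hlim₂ : Tendsto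
      (fun d => (⨆ i, (hΨ₂ d).isHermitian.eigenvalues i) / (∑ i, μ d i ^ 2))
      atTop (nhds 0))
    (h₁ : (d : ℕ) → Fin (d + 1) → ℝ)
    (hunit : ∀ d, (∑ i, h₁ d i ^ 2) = 1)
    (heig : ∀ d, (S d).mulVec (h₁ d) = (⨆ i, (hherm d).eigenvalues i) • h₁ d)
    (hsign : ∀ d, 0 ≤ ∑ i, h₁ d i * μ d i) :
    Tendsto (fun d => (∑ i, h₁ d i * μ d i) / Real.sqrt (∑ i, μ d i ^ 2))
      atTop (nhds 1) := by
  have hsq {m : ℕ} (v : Fin m → ℝ) : ∑ i, v i ^ 2 = v ⬝ᵥ v := by simp only [dotProduct, sq]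
  obtain rfl : S = fun d => spikedCovariance ε₁ ε₂ (μ d) (Ψ₁ d) (Ψ₂ d) := funext hS
  simp only [hsq] at hlim₁ hlim₂ hunit ⊢
  have hcos_sq d := one_sub_le_sq_dotProduct_div_sqrt hε₁ hε₂ (hΨ₁ d) (hΨ₂ d) (hμ d) (hherm d)
    (hunit d) (heig d)
  have hcos_mem d : h₁ d ⬝ᵥ μ d / √(μ d ⬝ᵥ μ d) ∈ Set.Icc 0 1 :=
    ⟨div_nonneg (hsign d) (Real.sqrt_nonneg _), dotProduct_div_sqrt_le_one (hunit d)⟩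
  refine tendsto_one_of_le_sq ?_ hcos_mem hcos_sq
  simpa using ((hlim₁.div_const ε₂).const_sub 1).sub (hlim₂.div_const ε₁)

/-- If `λ_max(Ψ_s(d))/‖μ(d)‖² → 0` for `s = 1,2`, then the unit first eigenvector
`h₁(d)` of `Σ(d)` (sign-normalized so `h₁ᵀμ ≥ 0`) satisfies
`h₁(d)ᵀμ(d)/‖μ(d)‖ → 1`, i.e. the angle between `h₁(d)` and `μ(d)` tends to 0. -/
theorem stmt8 (ε₁ ε₂ : ℝ) (hε₁ : 0 < ε₁) (hε₂ : 0 < ε₂) (hsum : ε₁ + ε₂ = 1)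
    (μ : (d : ℕ) → Fin (d + 1) → ℝ) (hμ : ∀ d, μ d ≠ 0)
    (Ψ₁ Ψ₂ : (d : ℕ) → Matrix (Fin (d + 1)) (Fin (d + 1)) ℝ)
    (hΨ₁ : ∀ d, (Ψ₁ d).PosSemidef) (hΨ₂ : ∀ d, (Ψ₂ d).PosSemidef)
    (S : (d : ℕ) → Matrix (Fin (d + 1)) (Fin (d + 1)) ℝ)
    (hS : ∀ d, S d = (ε₁ * ε₂) • Matrix.vecMulVec (μ d) (μ d) + ε₁ • Ψ₁ d + ε₂ • Ψ₂ d)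
    (hherm : ∀ d, (S d).IsHermitian)
    (hlim₁ : Tendsto
      (fun d => (⨆ i, (hΨ₁ d).isHermitian.eigenvalues i) / (∑ i, μ d i ^ 2))
      atTop (nhds 0))
    (hlim₂ : Tendsto
      (fun d => (⨆ i, (hΨ₂ d).isHermitian.eigenvalues i) / (∑ i, μ d i ^ 2))
      atTop (nhds 0))
    (h₁ : (d : ℕ) → Fin (d + 1) → ℝ)
    (hunit : ∀ d, (∑ i, h₁ d i ^ 2) = 1)
    (heig : ∀ d, (S d).mulVec (h₁ d) = (⨆ i, (hherm d).eigenvalues i) • h₁ d)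
    (hsign : ∀ d, 0 ≤ ∑ i, h₁ d i * μ d i) :
    Tendsto (fun d => (∑ i, h₁ d i * μ d i) / Real.sqrt (∑ i, μ d i ^ 2))
      atTop (nhds 1) :=
  stmt8_general ε₁ ε₂ hε₁ hε₂ μ hμ Ψ₁ Ψ₂ hΨ₁ hΨ₂ S hS hherm hlim₁ hlim₂ h₁ hunit heig hsign
end
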